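/- Let F be a field, m, k ≥ 1, let d be a fixed row vector of F^k, let Q be a quadratic form on F^m with polar form of Gram matrix J, and let φ: (F^k, +) → O_m(F, Q) be a group homomorphism. Then the set R = {(1, v, a + Q(v)d; 0, φ(a), φ(a)(Jv^T ⊗ d); 0, 0, I_k) : v ∈ F^m, a ∈ F^k} is a regular subgroup of AGL_{m+k}(F). -/

import Mathlib

open Matrix

/-- `M` lies in the affine group `AGL_n(F) ≤ GL_{n+1}(F)`:
it has block form `(1 v; 0 A)`, i.e. entry `(0,0)` equals `1` and the rest of
the first column is `0`. -/
def IsAffine {F : Type*} [Field F] {n : ℕ} (M : GL (Fin (n + 1)) F) : Prop :=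
  (M : Matrix (Fin (n + 1)) (Fin (n + 1)) F) 0 0 = 1 ∧
    ∀ i : Fin (n + 1), i ≠ 0 → (M : Matrix (Fin (n + 1)) (Fin (n + 1)) F) i 0 = 0

/-- `M` is a translation: it is affine with linear part `A = I_n`,
i.e. all rows other than the first agree with the identity matrix. -/
def IsTranslation {F : Type*} [Field F] {n : ℕ} (M : GL (Fin (n + 1)) F) : Prop :=
  IsAffine M ∧ ∀ i j : Fin (n + 1), i ≠ 0 →
    (M : Matrix (Fin (n + 1)) (Fin (n + 1)) F) i j = if i = j then 1 else 0

/-- `R` is a regular subgroup of `AGL_n(F)`: all its elements are affine and for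
every `v ∈ F^n` there is exactly one element of `R` with first row `(1, v)`. -/
def IsRegularAffine {F : Type*} [Field F] {n : ℕ} (R : Subgroup (GL (Fin (n + 1)) F)) : Prop :=
  (∀ M ∈ R, IsAffine M) ∧
    ∀ v : Fin n → F, ∃! M : GL (Fin (n + 1)) F, M ∈ R ∧
      ∀ j : Fin n, (M : Matrix (Fin (n + 1)) (Fin (n + 1)) F) 0 j.succ = v j

/-- `M ∈ GL_{n+1}(F)` is unipotent: `(M - I)^{n+1} = 0`. -/
def IsUnipotent {F : Type*} [Field F] {n : ℕ} (M : GL (Fin (n + 1)) F) : Prop :=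
  ((M : Matrix (Fin (n + 1)) (Fin (n + 1)) F) - 1) ^ (n + 1) = 0

/-- The block matrix `(1, v, a + Q(v)d; 0, φ(a), φ(a)(Jvᵀ ⊗ d); 0, 0, I_k)`
of size `m+k+1`. -/
def RMat {F : Type*} [Field F] (m k : ℕ) (Q : (Fin m → F) → F)
    (J : Matrix (Fin m) (Fin m) F) (d : Fin k → F)
    (φ : (Fin k → F) → Matrix (Fin m) (Fin m) F)
    (v : Fin m → F) (a : Fin k → F) :
    Matrix (Fin (m + k + 1)) (Fin (m + k + 1)) F :=
  Matrix.of fun i j =>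
    if hi0 : (i : ℕ) = 0 then
      if hj0 : (j : ℕ) = 0 then 1
      else if hjm : (j : ℕ) ≤ m then v ⟨(j : ℕ) - 1, by omega⟩
      else a ⟨(j : ℕ) - m - 1, by have := j.2; omega⟩ +
        Q v * d ⟨(j : ℕ) - m - 1, by have := j.2; omega⟩
    else if him : (i : ℕ) ≤ m then
      if hj0 : (j : ℕ) = 0 then 0
      else if hjm : (j : ℕ) ≤ m then φ a ⟨(i : ℕ) - 1, by omega⟩ ⟨(j : ℕ) - 1, by omega⟩
      else ((φ a).mulVec (J.mulVec v)) ⟨(i : ℕ) - 1, by omega⟩ *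
        d ⟨(j : ℕ) - m - 1, by have := j.2; omega⟩
    else
      if hjm : m < (j : ℕ) then (if i = j then 1 else 0) else 0

/-!
After moving the coordinates to `Fin 1 ⊕ (Fin m ⊕ Fin k)`, `RMat v a` is the affine block matrix
`(1, r; 0, A)` with `r = (v, a + Q(v) d)` and `A = (φ(a), φ(a) J vᵀ ⊗ d; 0, I_k)`. Multiplying
blocks gives `RMat(v₁, a₁) * RMat(v₂, a₂) = RMat(v₂ + v₁ φ(a₂), a₁ + a₂)`: the last block of the
row needs `Q(v₂ + v₁ φ(a₂)) = Q(v₂) + Q(v₁) + v₁ φ(a₂) J v₂ᵀ`, and the corner block needs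
`φ(a) J φ(a)ᵀ = J`; both hold because `φ(a)` is an isometry of `Q`. Hence the matrices form a
group, with `RMat(0, 0) = 1` and inverse `RMat(-v φ(-a), -a)`. It is regular since the first row
`(1, v, a + Q(v) d)` recovers `v` and then `a`.
-/

theorem QuadraticMap.mulVec_mulVec_vecMul_of_isometry {R ι : Type*} [CommRing R] [Fintype ι]
    (Q : QuadraticMap R (ι → R) R) {J : Matrix ι ι R}
    (hJ : ∀ u w, QuadraticMap.polar Q u w = u ⬝ᵥ J *ᵥ w)
    {A : Matrix ι ι R} (hA : ∀ w, Q (w ᵥ* A) = Q w) (u : ι → R) :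
    A *ᵥ (J *ᵥ (u ᵥ* A)) = J *ᵥ u := by
  refine dotProduct_eq _ _ fun w => ?_
  rw [dotProduct_comm, dotProduct_mulVec, ← hJ, dotProduct_comm, ← hJ]
  simp only [QuadraticMap.polar, ← add_vecMul, hA]

theorem Submonoid.mem_units_iff_val_mem {M : Type*} [Monoid M] {S : Submonoid M}
    (hS : ∀ x ∈ S, ∃ y ∈ S, x * y = 1) (u : Mˣ) : u ∈ S.units ↔ (u : M) ∈ S := by
  refine ⟨fun h => h.1, fun h => ⟨h, ?_⟩⟩
  obtain ⟨y, hy, huy⟩ := hS u h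
  rwa [← Units.inv_eq_of_mul_eq_one_right huy] at hy

theorem existsUnique_sum_elim_add_smul {R ι κ : Type*} [Ring R] (q : (ι → R) → R) (d : κ → R)
    (g : ι ⊕ κ → R) : ∃! p : (ι → R) × (κ → R), Sum.elim p.1 (p.2 + q p.1 • d) = g := by
  refine ⟨(g ∘ Sum.inl, g ∘ Sum.inr - q (g ∘ Sum.inl) • d), by simp, ?_⟩
  rintro ⟨v, a⟩ rfl
  simp

section AffineBlock

variable {R ι : Type*} [Semiring R]

def affineBlock (r : ι → R) (A : Matrix ι ι R) : Matrix (Fin 1 ⊕ ι) (Fin 1 ⊕ ι) R :=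
  fromBlocks 1 (replicateRow (Fin 1) r) 0 A

theorem affineBlock_mul [Fintype ι] (r₁ r₂ : ι → R) (A₁ A₂ : Matrix ι ι R) :
    affineBlock r₁ A₁ * affineBlock r₂ A₂ = affineBlock (r₂ + r₁ ᵥ* A₂) (A₁ * A₂) := by
  simp [affineBlock, fromBlocks_multiply, ← replicateRow_vecMul, replicateRow_add, add_comm]

theorem affineBlock_zero_one [DecidableEq ι] : affineBlock (0 : ι → R) 1 = 1 := by
  simp [affineBlock, fromBlocks_one]

variable {n : ℕ} (σ : ι ≃ Fin n)

def affineIndexEquiv : Fin 1 ⊕ ι ≃ Fin (n + 1) :=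
  (Equiv.sumCongr (Equiv.refl _) σ).trans (finSumFinEquiv.trans (finCongr (Nat.add_comm 1 n)))

@[simp]
theorem affineIndexEquiv_inl (i : Fin 1) : affineIndexEquiv σ (Sum.inl i) = 0 := by
  ext; simp [affineIndexEquiv, Fin.fin_one_eq_zero i]

@[simp]
theorem affineIndexEquiv_inr (x : ι) : affineIndexEquiv σ (Sum.inr x) = (σ x).succ := by
  ext; simp [affineIndexEquiv, add_comm]

@[simp]
theorem affineIndexEquiv_symm_zero : (affineIndexEquiv σ).symm 0 = Sum.inl 0 := by
  simp [Equiv.symm_apply_eq]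

@[simp]
theorem affineIndexEquiv_symm_succ (x : ι) :
    (affineIndexEquiv σ).symm (σ x).succ = Sum.inr x := by
  simp [Equiv.symm_apply_eq]

variable (r : ι → R) (A : Matrix ι ι R)

theorem reindex_affineBlock_zero_zero :
    reindex (affineIndexEquiv σ) (affineIndexEquiv σ) (affineBlock r A) 0 0 = 1 := by
  simp [affineBlock]

theorem reindex_affineBlock_succ_zero (i : Fin n) :
    reindex (affineIndexEquiv σ) (affineIndexEquiv σ) (affineBlock r A) i.succ 0 = 0 := by
  obtain ⟨x, rfl⟩ := σ.surjective i
  simp [affineBlock]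

theorem reindex_affineBlock_zero_succ (x : ι) :
    reindex (affineIndexEquiv σ) (affineIndexEquiv σ) (affineBlock r A) 0 (σ x).succ = r x := by
  simp [affineBlock]

theorem isAffine_of_val_eq_reindex_affineBlock {F : Type*} [Field F] {σ : ι ≃ Fin n}
    {r : ι → F} {A : Matrix ι ι F} {M : GL (Fin (n + 1)) F}
    (hM : (M : Matrix (Fin (n + 1)) (Fin (n + 1)) F) =
      reindex (affineIndexEquiv σ) (affineIndexEquiv σ) (affineBlock r A)) :
    IsAffine M := by
  refine ⟨hM ▸ reindex_affineBlock_zero_zero σ r A, fun i hi => ?_⟩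
  obtain ⟨j, rfl⟩ := Fin.exists_succ_eq.2 hi
  exact hM ▸ reindex_affineBlock_succ_zero σ r A j

end AffineBlock

section RBlock

variable {R ι κ : Type*} [CommRing R] [Fintype ι] [DecidableEq κ]

def RBlock (Q : (ι → R) → R) (J : Matrix ι ι R) (d : κ → R) (φ : (κ → R) → Matrix ι ι R)
    (v : ι → R) (a : κ → R) : Matrix (Fin 1 ⊕ (ι ⊕ κ)) (Fin 1 ⊕ (ι ⊕ κ)) R :=
  affineBlock (Sum.elim v (a + Q v • d)) (fromBlocks (φ a) (vecMulVec (φ a *ᵥ (J *ᵥ v)) d) 0 1)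

theorem RBlock_mul [Fintype κ] (Q : QuadraticMap R (ι → R) R) {J : Matrix ι ι R}
    (hJ : ∀ u w, QuadraticMap.polar Q u w = u ⬝ᵥ J *ᵥ w) (d : κ → R)
    {φ : (κ → R) → Matrix ι ι R} (hφ_mul : ∀ a b, φ (a + b) = φ a * φ b)
    (hφ_isom : ∀ a w, Q (w ᵥ* φ a) = Q w) (v₁ v₂ : ι → R) (a₁ a₂ : κ → R) :
    RBlock Q J d φ v₁ a₁ * RBlock Q J d φ v₂ a₂ =
      RBlock Q J d φ (v₂ + v₁ ᵥ* φ a₂) (a₁ + a₂) := by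
  have hQ : Q (v₂ + v₁ ᵥ* φ a₂) = Q v₂ + Q v₁ + v₁ ⬝ᵥ (φ a₂ *ᵥ (J *ᵥ v₂)) := by
    rw [add_comm v₂, QuadraticMap.map_add (⇑Q), hJ, hφ_isom, dotProduct_mulVec v₁ (φ a₂)]
    ring
  have hJφ := Q.mulVec_mulVec_vecMul_of_isometry hJ (hφ_isom a₂) v₁
  simp only [RBlock, affineBlock_mul, fromBlocks_multiply, vecMul_fromBlocks]
  congr 1
  · ext (i | j)
    · simp
    · simp [vecMul_vecMulVec, hQ]
      ring
  · simp [hφ_mul, mul_vecMulVec, mulVec_add, ← mulVec_mulVec, hJφ, add_vecMulVec]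

theorem RBlock_zero_zero [DecidableEq ι] (Q : QuadraticMap R (ι → R) R) (J : Matrix ι ι R)
    (d : κ → R) {φ : (κ → R) → Matrix ι ι R} (hφ_zero : φ 0 = 1) :
    RBlock Q J d φ 0 0 = 1 := by
  simp [RBlock, hφ_zero, fromBlocks_one, affineBlock_zero_one]

end RBlock

section RMat

variable {F : Type*} [Field F] {m k : ℕ}

section

variable (Q : (Fin m → F) → F) (J : Matrix (Fin m) (Fin m) F) (d : Fin k → F)
  (φ : (Fin k → F) → Matrix (Fin m) (Fin m) F)

theorem RMat_eq_reindex (v : Fin m → F) (a : Fin k → F) :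
    RMat m k Q J d φ v a =
      reindex (affineIndexEquiv finSumFinEquiv) (affineIndexEquiv finSumFinEquiv)
        (RBlock Q J d φ v a) := by
  rw [← Equiv.symm_apply_eq, reindex_symm]
  have h : ∀ s : ℕ, m + s + 1 - m - 1 = s := by omega
  ext (i | i | t) (j | j | s) <;>
    simp [RMat, RBlock, affineBlock, Fin.fin_one_eq_zero, one_apply, vecMulVec_apply, h]

theorem RMat_zero_succ (v : Fin m → F) (a : Fin k → F) (x : Fin m ⊕ Fin k) :
    RMat m k Q J d φ v a 0 (finSumFinEquiv x).succ = Sum.elim v (a + Q v • d) x := by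
  rw [RMat_eq_reindex]
  exact reindex_affineBlock_zero_succ ..

theorem existsUnique_RMat_firstRow (w : Fin (m + k) → F) :
    ∃! p : (Fin m → F) × (Fin k → F), ∀ j, RMat m k Q J d φ p.1 p.2 0 j.succ = w j := by
  have hrow (p : (Fin m → F) × (Fin k → F)) : (∀ j, RMat m k Q J d φ p.1 p.2 0 j.succ = w j) ↔
      Sum.elim p.1 (p.2 + Q p.1 • d) = w ∘ finSumFinEquiv := by
    rw [← finSumFinEquiv.forall_congr_right, funext_iff]
    simp [RMat_zero_succ]
  simpa only [hrow] using existsUnique_sum_elim_add_smul Q d (w ∘ finSumFinEquiv)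

end

theorem RMat_mul (Q : QuadraticForm F (Fin m → F)) {J : Matrix (Fin m) (Fin m) F}
    (hJ : ∀ u w, QuadraticMap.polar Q u w = u ⬝ᵥ J *ᵥ w) (d : Fin k → F)
    {φ : (Fin k → F) → Matrix (Fin m) (Fin m) F} (hφ_mul : ∀ a b, φ (a + b) = φ a * φ b)
    (hφ_isom : ∀ a w, Q (w ᵥ* φ a) = Q w) (v₁ v₂ : Fin m → F) (a₁ a₂ : Fin k → F) :
    RMat m k Q J d φ v₁ a₁ * RMat m k Q J d φ v₂ a₂ =
      RMat m k Q J d φ (v₂ + v₁ ᵥ* φ a₂) (a₁ + a₂) := by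
  simp only [RMat_eq_reindex, reindex_apply, submatrix_mul_equiv,
    RBlock_mul Q hJ d hφ_mul hφ_isom]

theorem RMat_zero_zero (Q : QuadraticForm F (Fin m → F)) (J : Matrix (Fin m) (Fin m) F)
    (d : Fin k → F) {φ : (Fin k → F) → Matrix (Fin m) (Fin m) F} (hφ_zero : φ 0 = 1) :
    RMat m k Q J d φ 0 0 = 1 := by
  rw [RMat_eq_reindex, RBlock_zero_zero Q J d hφ_zero, reindex_apply, submatrix_one_equiv]

end RMat

theorem RMat_set_is_regular_subgroup_general {F : Type*} [Field F] {m k : ℕ}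
    (d : Fin k → F) (Q : QuadraticForm F (Fin m → F)) (J : Matrix (Fin m) (Fin m) F)
    (hJ : ∀ u w : Fin m → F, QuadraticMap.polar (fun x => Q x) u w = u ⬝ᵥ J.mulVec w)
    (φ : (Fin k → F) → Matrix (Fin m) (Fin m) F)
    (hφ_mul : ∀ a b : Fin k → F, φ (a + b) = φ a * φ b)
    (hφ_unit : ∀ a : Fin k → F, IsUnit (φ a))
    (hφ_isom : ∀ (a : Fin k → F) (w : Fin m → F), Q (Matrix.vecMul w (φ a)) = Q w) :
    ∃ R : Subgroup (GL (Fin (m + k + 1)) F),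
      (∀ M : GL (Fin (m + k + 1)) F,
          M ∈ R ↔ ∃ (v : Fin m → F) (a : Fin k → F),
            (M : Matrix (Fin (m + k + 1)) (Fin (m + k + 1)) F) =
              RMat m k (fun x => Q x) J d φ v a) ∧
      IsRegularAffine R := by
  have hφ_zero : φ 0 = 1 := (hφ_unit 0).mul_eq_left.1 (by rw [← hφ_mul, add_zero])
  have hmul := RMat_mul Q hJ d hφ_mul hφ_isom
  have hinv (v : Fin m → F) (a : Fin k → F) :
      RMat m k Q J d φ v a * RMat m k Q J d φ (-(v ᵥ* φ (-a))) (-a) = 1 := by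
    rw [hmul, neg_add_cancel, add_neg_cancel, RMat_zero_zero Q J d hφ_zero]
  let S : Submonoid (Matrix (Fin (m + k + 1)) (Fin (m + k + 1)) F) :=
    { carrier := {M | ∃ v a, M = RMat m k Q J d φ v a}
      mul_mem' := by
        rintro _ _ ⟨v₁, a₁, rfl⟩ ⟨v₂, a₂, rfl⟩
        exact ⟨_, _, hmul v₁ v₂ a₁ a₂⟩
      one_mem' := ⟨0, 0, (RMat_zero_zero Q J d hφ_zero).symm⟩ }
  have hS : ∀ M, M ∈ S.units ↔ ∃ v a, (M : Matrix _ _ F) = RMat m k Q J d φ v a :=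
    Submonoid.mem_units_iff_val_mem <| by
      rintro _ ⟨v, a, rfl⟩
      exact ⟨_, ⟨_, _, rfl⟩, hinv v a⟩
  refine ⟨S.units, hS, fun M hM => ?_, fun w => ?_⟩
  · obtain ⟨v, a, hM⟩ := (hS M).1 hM
    exact isAffine_of_val_eq_reindex_affineBlock (hM.trans (RMat_eq_reindex ..))
  · obtain ⟨⟨v, a⟩, hrow, huniq⟩ := existsUnique_RMat_firstRow Q J d φ w
    have hunit : IsUnit (RMat m k Q J d φ v a) := .of_mul_eq_one _ (hinv v a)
    refine ⟨hunit.unit, ⟨(hS _).2 ⟨v, a, rfl⟩, hrow⟩, ?_⟩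
    rintro N ⟨hN, hNrow⟩
    obtain ⟨v', a', hN⟩ := (hS N).1 hN
    obtain ⟨rfl, rfl⟩ := Prod.mk.inj (huniq (v', a') (fun j => hN ▸ hNrow j))
    exact Units.ext hN

/-- Lemma 3(c), first part: `R = M ⋉ N` is a regular subgroup of `AGL_{m+k}(F)`. -/
theorem RMat_set_is_regular_subgroup {F : Type*} [Field F] {m k : ℕ}
    (hm : 1 ≤ m) (hk : 1 ≤ k)
    (d : Fin k → F) (Q : QuadraticForm F (Fin m → F)) (J : Matrix (Fin m) (Fin m) F)
    (hJ : ∀ u w : Fin m → F, QuadraticMap.polar (fun x => Q x) u w = u ⬝ᵥ J.mulVec w)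
    (φ : (Fin k → F) → Matrix (Fin m) (Fin m) F)
    (hφ_mul : ∀ a b : Fin k → F, φ (a + b) = φ a * φ b)
    (hφ_unit : ∀ a : Fin k → F, IsUnit (φ a))
    (hφ_isom : ∀ (a : Fin k → F) (w : Fin m → F), Q (Matrix.vecMul w (φ a)) = Q w) :
    ∃ R : Subgroup (GL (Fin (m + k + 1)) F),
      (∀ M : GL (Fin (m + k + 1)) F,
          M ∈ R ↔ ∃ (v : Fin m → F) (a : Fin k → F),
            (M : Matrix (Fin (m + k + 1)) (Fin (m + k + 1)) F) =
              RMat m k (fun x => Q x) J d φ v a) ∧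
      IsRegularAffine R :=
  RMat_set_is_regular_subgroup_general d Q J hJ φ hφ_mul hφ_unit hφ_isom
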